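/- Let 0 < r < R, let (x0,y0,0) be a real point of the torus T = 0 and the quadric Q = 0, and assume x0^2 + y0^2 ≠ 0. Then the Jacobian matrix of (T,Q) at (x0,y0,0) has rank at most one if and only if (x0,y0) is a non-transversal intersection point of the curves Δ_T = 0 and Δ_Q = 0, i.e., Δ_T(x0,y0) = Δ_Q(x0,y0) = 0 and the Jacobian determinant of (Δ_T, Δ_Q) vanishes at (x0,y0). -/

import Mathlib

/-- The torus polynomial `T(x,y,z) = (x^2+y^2+z^2+R^2-r^2)^2 - 4R^2(x^2+y^2)`. -/
def torusT (R r : ℝ) (x y z : ℝ) : ℝ :=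
  (x ^ 2 + y ^ 2 + z ^ 2 + R ^ 2 - r ^ 2) ^ 2 - 4 * R ^ 2 * (x ^ 2 + y ^ 2)

/-- The quadric polynomial `Q(x,y,z)`. -/
def quadQ (a b d e f g h i j : ℝ) (x y z : ℝ) : ℝ :=
  z ^ 2 + (e * x + f * y + i) * z
    + (a * x ^ 2 + b * y ^ 2 + d * x * y + g * x + h * y + j)

/-- `Δ_T(x,y)` for the torus. -/
def delT (R r : ℝ) (x y : ℝ) : ℝ :=
  (R ^ 2 + 2 * R * r + r ^ 2 - x ^ 2 - y ^ 2) * (R ^ 2 - 2 * R * r + r ^ 2 - x ^ 2 - y ^ 2)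

/-- `Δ_Q(x,y)` for the quadric. -/
def delQ (a b d e f g h i j : ℝ) (x y : ℝ) : ℝ :=
  (e * x + f * y + i) ^ 2
    - 4 * (a * x ^ 2 + b * y ^ 2 + d * x * y + g * x + h * y + j)

/-! In the plane `z = 0` one has `Δ_T(x, y) = T(x, y, 0)`, and on the quadric `Δ_Q = q₁²`.
With `s = R² + r² - x₀² - y₀²`, a point of the torus satisfies `s² = 4R²r² ≠ 0`. The rows of the
Jacobian of `(T, Q)` are `(-4x₀s, -4y₀s, 0)` and `(Q_x, Q_y, q₁)`, so rank `≤ 1` (vanishing cross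
product) means `q₁ = 0` and `x₀Q_y - y₀Q_x = 0`. The Jacobian determinant of `(Δ_T, Δ_Q)` is
`-8s((fx₀ - ey₀)q₁ - 2(x₀Q_y - y₀Q_x))`, so together with `Δ_Q = q₁² = 0` it encodes the same two
conditions. -/

open Matrix

theorem Matrix.rank_lt_card_height_iff {K m n : Type*} [Field K] [Fintype m] [Fintype n]
    (M : Matrix m n K) : M.rank < Fintype.card m ↔ ¬LinearIndependent K M.row := by
  rw [linearIndependent_iff_card_eq_finrank_span, M.rank_eq_finrank_span_row, ← Set.finrank]
  exact (finrank_range_le_card M.row).lt_iff_ne.trans ne_comm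

theorem Matrix.rank_of_pair_le_one_iff_cross_eq_zero {K : Type*} [Field K] (u v : Fin 3 → K) :
    (of ![u, v]).rank ≤ 1 ↔ u ⨯₃ v = 0 := by
  rw [← not_ne_iff, crossProduct_ne_zero_iff_linearIndependent, ← Nat.lt_succ_iff]
  simpa using rank_lt_card_height_iff (of ![u, v])

section PartialDerivatives

variable (R r a b d e f g h i j x0 y0 : ℝ)

lemma deriv_torusT_x :
    deriv (fun x => torusT R r x y0 0) x0 = -4 * x0 * (R ^ 2 + r ^ 2 - x0 ^ 2 - y0 ^ 2) := by
  simp (disch := fun_prop) [torusT]; ring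

lemma deriv_torusT_y :
    deriv (fun y => torusT R r x0 y 0) y0 = -4 * y0 * (R ^ 2 + r ^ 2 - x0 ^ 2 - y0 ^ 2) := by
  simp (disch := fun_prop) [torusT]; ring

lemma deriv_torusT_z : deriv (fun z => torusT R r x0 y0 z) 0 = 0 := by
  simp (disch := fun_prop) [torusT]

lemma deriv_quadQ_x :
    deriv (fun x => quadQ a b d e f g h i j x y0 0) x0 = 2 * a * x0 + d * y0 + g := by
  simp (disch := fun_prop) [quadQ]; ring

lemma deriv_quadQ_y :
    deriv (fun y => quadQ a b d e f g h i j x0 y 0) y0 = 2 * b * y0 + d * x0 + h := by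
  simp (disch := fun_prop) [quadQ]; ring

lemma deriv_quadQ_z :
    deriv (fun z => quadQ a b d e f g h i j x0 y0 z) 0 = e * x0 + f * y0 + i := by
  simp (disch := fun_prop) [quadQ]

lemma deriv_delT_x :
    deriv (fun x => delT R r x y0) x0 = -4 * x0 * (R ^ 2 + r ^ 2 - x0 ^ 2 - y0 ^ 2) := by
  simp (disch := fun_prop) [delT]; ring

lemma deriv_delT_y :
    deriv (fun y => delT R r x0 y) y0 = -4 * y0 * (R ^ 2 + r ^ 2 - x0 ^ 2 - y0 ^ 2) := by
  simp (disch := fun_prop) [delT]; ring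

lemma deriv_delQ_x :
    deriv (fun x => delQ a b d e f g h i j x y0) x0
      = 2 * (e * x0 + f * y0 + i) * e - 4 * (2 * a * x0 + d * y0 + g) := by
  simp (disch := fun_prop) [delQ]; ring

lemma deriv_delQ_y :
    deriv (fun y => delQ a b d e f g h i j x0 y) y0
      = 2 * (e * x0 + f * y0 + i) * f - 4 * (2 * b * y0 + d * x0 + h) := by
  simp (disch := fun_prop) [delQ]; ring

end PartialDerivatives

lemma delT_eq_torusT (R r x y : ℝ) : delT R r x y = torusT R r x y 0 := by
  unfold delT torusT; ring

lemma delQ_eq_sq_of_quadQ_eq_zero {a b d e f g h i j x y : ℝ}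
    (hQ : quadQ a b d e f g h i j x y 0 = 0) :
    delQ a b d e f g h i j x y = (e * x + f * y + i) ^ 2 := by
  unfold quadQ at hQ
  unfold delQ
  linear_combination -4 * hQ

lemma sum_sq_sub_ne_zero_of_torusT_eq_zero {R r x y : ℝ} (hR : R ≠ 0) (hr : r ≠ 0)
    (hT : torusT R r x y 0 = 0) : R ^ 2 + r ^ 2 - x ^ 2 - y ^ 2 ≠ 0 := by
  intro hs
  have : (2 * R * r) ^ 2 = 0 := by
    unfold torusT at hT
    linear_combination (R ^ 2 + r ^ 2 - x ^ 2 - y ^ 2) * hs - hT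
  exact mul_ne_zero (mul_ne_zero two_ne_zero hR) hr (pow_eq_zero_iff two_ne_zero |>.mp this)

section Minors

variable {K : Type*} [Field K] [CharZero K] {x y s P S q e f : K}

lemma cross_jacobian_rows_eq_zero_iff (hs : s ≠ 0) (hxy : x ≠ 0 ∨ y ≠ 0) :
    ![-4 * x * s, -4 * y * s, 0] ⨯₃ ![P, S, q] = 0 ↔ q = 0 ∧ x * S - y * P = 0 := by
  rw [cross_apply]
  simp only [cons_val_zero, cons_val_one, cons_val_two, tail_cons, head_cons, cons_eq_zero_iff,
    zero_empty, and_true]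
  constructor
  · rintro ⟨hyq, hxq, hM⟩
    have hq : q = 0 := by
      rcases hxy with hx | hy
      · simpa [hx, hs] using hxq
      · simpa [hy, hs] using hyq
    refine ⟨hq, ?_⟩
    have : -4 * s * (x * S - y * P) = 0 := by linear_combination hM
    simpa [hs] using this
  · rintro ⟨rfl, hM⟩
    exact ⟨by ring, by ring, by linear_combination -4 * s * hM⟩

lemma sq_eq_zero_and_jacobian_det_eq_zero_iff (hs : s ≠ 0) :
    (q ^ 2 = 0 ∧ -4 * x * s * (2 * q * f - 4 * S) - -4 * y * s * (2 * q * e - 4 * P) = 0)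
      ↔ q = 0 ∧ x * S - y * P = 0 := by
  rw [pow_eq_zero_iff two_ne_zero]
  refine and_congr_right fun hq => ?_
  subst hq
  constructor
  · intro hJ
    have : 16 * s * (x * S - y * P) = 0 := by linear_combination hJ
    simpa [hs] using this
  · intro hM
    linear_combination 16 * s * hM

end Minors

/-- For `(x0,y0,0)` a real point of the torus and the quadric with
`x0^2 + y0^2 ≠ 0`: the Jacobian matrix of `(T,Q)` at `(x0,y0,0)` has rank at most
one iff `(x0,y0)` is a non-transversal intersection point of `Δ_T = 0` and
`Δ_Q = 0`. -/
theorem stmt18 (R r a b d e f g h i j x0 y0 : ℝ) (hr : 0 < r) (hrR : r < R)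
    (hT : torusT R r x0 y0 0 = 0) (hQ : quadQ a b d e f g h i j x0 y0 0 = 0)
    (hxy : x0 ^ 2 + y0 ^ 2 ≠ 0) :
    (!![deriv (fun x => torusT R r x y0 0) x0,
        deriv (fun y => torusT R r x0 y 0) y0,
        deriv (fun z => torusT R r x0 y0 z) 0;
        deriv (fun x => quadQ a b d e f g h i j x y0 0) x0,
        deriv (fun y => quadQ a b d e f g h i j x0 y 0) y0,
        deriv (fun z => quadQ a b d e f g h i j x0 y0 z) 0] : Matrix (Fin 2) (Fin 3) ℝ).rank ≤ 1
      ↔ (delT R r x0 y0 = 0 ∧ delQ a b d e f g h i j x0 y0 = 0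
          ∧ deriv (fun x => delT R r x y0) x0 * deriv (fun y => delQ a b d e f g h i j x0 y) y0
            - deriv (fun y => delT R r x0 y) y0
              * deriv (fun x => delQ a b d e f g h i j x y0) x0 = 0) := by
  have hs := sum_sq_sub_ne_zero_of_torusT_eq_zero (hr.trans hrR).ne' hr.ne' hT
  have hxy' : x0 ≠ 0 ∨ y0 ≠ 0 := by
    contrapose! hxy
    simp [hxy.1, hxy.2]
  rw [deriv_torusT_x, deriv_torusT_y, deriv_torusT_z, deriv_quadQ_x, deriv_quadQ_y, deriv_quadQ_z,
    deriv_delT_x, deriv_delT_y, deriv_delQ_x, deriv_delQ_y, rank_of_pair_le_one_iff_cross_eq_zero]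
  simp only [delT_eq_torusT, hT, delQ_eq_sq_of_quadQ_eq_zero hQ, true_and]
  exact (cross_jacobian_rows_eq_zero_iff hs hxy').trans
    (sq_eq_zero_and_jacobian_det_eq_zero_iff hs).symm
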